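/- For every real a with 0 < a < 1, the function t ↦ ∫_t^a ((x/(x² + t − t²))² − 1)^{−1/2} dx tends to 1 − √(1 − a²) as t → 0⁺. -/

import Mathlib

/-!
Put `u = x² + t − t²`. Then `x − u = (x − t)(1 − t − x)`, and since `u ≤ x ≤ 1`,
`(x/u)² − 1 ≥ x − u`; hence for small `t` the integrand at `x = t + s` is at most
`(k s)^(−1/2)` with `k = (1 − a)/2`, uniformly in `t`. After the substitution `x = t + s`
the integrals live on the fixed interval `(0, a)` (cut off at `s = a − t`), the integrand
tends pointwise to its value at `t = 0`, namely `s/√(1 − s²)`, and dominated convergence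
gives the limit `∫₀ᵃ s/√(1 − s²) ds = 1 − √(1 − a²)`.
-/

open Filter Set MeasureTheory Topology

noncomputable def undularyIntegrand (t x : ℝ) : ℝ :=
  1 / √((x / (x ^ 2 + t - t ^ 2)) ^ 2 - 1)

lemma sub_le_div_sq_sub_one {u x : ℝ} (hu : 0 < u) (hux : u ≤ x) (hx : x ≤ 1) :
    x - u ≤ (x / u) ^ 2 - 1 := by
  rw [div_pow, le_sub_iff_add_le, le_div_iff₀ (by positivity)]
  nlinarith [mul_nonneg (sub_nonneg.2 hux) (sub_nonneg.2 (hux.trans hx))]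

lemma one_div_sqrt_eq_rpow {y : ℝ} (hy : 0 ≤ y) : 1 / √y = y ^ (-(1 / 2 : ℝ)) := by
  rw [Real.rpow_neg hy, ← Real.sqrt_eq_rpow, one_div]

lemma undularyIntegrand_le_rpow {t x k : ℝ} (ht : 0 ≤ t) (htx : t < x) (hk : 0 < k)
    (hkx : k ≤ 1 - t - x) : undularyIntegrand t x ≤ (k * (x - t)) ^ (-(1 / 2 : ℝ)) := by
  have hu : 0 < x ^ 2 + t - t ^ 2 := by nlinarith
  have hxu : x - (x ^ 2 + t - t ^ 2) = (x - t) * (1 - t - x) := by ring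
  have hkxu : k * (x - t) ≤ x - (x ^ 2 + t - t ^ 2) := by
    rw [hxu]; nlinarith
  have hpos : 0 < k * (x - t) := mul_pos hk (by linarith)
  rw [← one_div_sqrt_eq_rpow hpos.le, undularyIntegrand]
  gcongr
  exact hkxu.trans (sub_le_div_sq_sub_one hu (by linarith) (by linarith))

lemma undularyIntegrand_zero {s : ℝ} (hs : 0 < s) :
    undularyIntegrand 0 s = s / √(1 - s ^ 2) := by
  have h : (s / (s ^ 2 + 0 - 0 ^ 2)) ^ 2 - 1 = (1 - s ^ 2) / s ^ 2 := by
    field_simp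
    ring
  rw [undularyIntegrand, h, Real.sqrt_div' _ (sq_nonneg s), Real.sqrt_sq hs.le, one_div_div]

lemma continuousAt_undularyIntegrand_add {s : ℝ} (hs : 0 < s) (hs1 : s < 1) :
    ContinuousAt (fun t => undularyIntegrand t (s + t)) 0 := by
  have hD : (s + 0) ^ 2 + 0 - 0 ^ 2 ≠ 0 := by simpa using hs.ne'
  have hS : √(((s + 0) / ((s + 0) ^ 2 + 0 - 0 ^ 2)) ^ 2 - 1) ≠ 0 := by
    have h1 : 1 < s / s ^ 2 := by rw [lt_div_iff₀ (by positivity)]; nlinarith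
    simp only [add_zero, zero_pow two_ne_zero, sub_zero, ne_eq, Real.sqrt_eq_zero', not_le]
    nlinarith
  unfold undularyIntegrand
  fun_prop (disch := assumption)

lemma integral_div_sqrt_one_sub_sq {p q : ℝ} (hp : p ∈ Ioo (-1) 1) (hq : q ∈ Ioo (-1) 1) :
    ∫ x in p..q, x / √(1 - x ^ 2) = √(1 - p ^ 2) - √(1 - q ^ 2) := by
  have hpos : ∀ x ∈ uIcc p q, 0 < 1 - x ^ 2 := fun x hx => by
    obtain ⟨h1, h2⟩ := (ordConnected_Ioo.uIcc_subset hp hq) hx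
    nlinarith
  rw [intervalIntegral.integral_eq_sub_of_hasDerivAt (f := fun x => -√(1 - x ^ 2))]
  · ring
  · intro x hx
    convert ((((hasDerivAt_pow 2 x).const_sub 1).sqrt (hpos x hx).ne').neg) using 1
    · rfl
    · norm_num
      field_simp
  · exact (continuousOn_id.div (by fun_prop) fun x hx =>
      (Real.sqrt_pos.2 (hpos x hx)).ne').intervalIntegrable

lemma integral_eq_integral_indicator_comp_add {E : Type*} [NormedAddCommGroup E]
    [NormedSpace ℝ E] (f : ℝ → E) {t a : ℝ} (ht : 0 ≤ t)
    (hta : t ≤ a) :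
    ∫ x in t..a, f x = ∫ s in 0..a, (Iic (a - t)).indicator (fun s => f (s + t)) s := by
  rw [intervalIntegral.integral_of_le (ht.trans hta), setIntegral_indicator measurableSet_Iic,
    Ioc_inter_Iic, min_eq_right (by linarith), ← intervalIntegral.integral_of_le (by linarith),
    intervalIntegral.integral_comp_add_right]
  simp

lemma tendsto_integral_indicator_undularyIntegrand {a : ℝ} (ha0 : 0 ≤ a) (ha1 : a < 1) :
    Tendsto
      (fun t => ∫ s in 0..a, (Iic (a - t)).indicator (fun s => undularyIntegrand t (s + t)) s)
      (𝓝[>] 0) (𝓝 (1 - √(1 - a ^ 2))) := by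
  have hk : 0 < (1 - a) / 2 := by linarith
  have hlimit : ∫ s in 0..a, s / √(1 - s ^ 2) = 1 - √(1 - a ^ 2) := by
    rw [integral_div_sqrt_one_sub_sq (by norm_num) ⟨by linarith, ha1⟩]
    norm_num
  rw [← hlimit]
  refine intervalIntegral.tendsto_integral_filter_of_dominated_convergence
    (fun s => ((1 - a) / 2 * s) ^ (-(1 / 2 : ℝ))) ?_ ?_ ?_ ?_
  · refine Eventually.of_forall fun t =>
      (Measurable.indicator ?_ measurableSet_Iic).aestronglyMeasurable
    unfold undularyIntegrand
    fun_prop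
  · filter_upwards [Ioc_mem_nhdsGT hk] with t ⟨ht0, htk⟩
    refine Eventually.of_forall fun s hs => ?_
    rw [uIoc_of_le ha0] at hs
    by_cases hst : s ∈ Iic (a - t)
    · rw [indicator_of_mem hst, Real.norm_of_nonneg (by unfold undularyIntegrand; positivity)]
      simpa using undularyIntegrand_le_rpow (x := s + t) ht0.le (by linarith [hs.1]) hk
        (by linarith [mem_Iic.1 hst])
    · rw [indicator_of_notMem hst, norm_zero]
      exact Real.rpow_nonneg (mul_nonneg hk.le hs.1.le) _
  · simpa [hk.ne'] using (intervalIntegral.intervalIntegrable_rpow' (a := 0)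
      (b := (1 - a) / 2 * a) (r := -(1 / 2)) (by norm_num)).comp_mul_left (c := (1 - a) / 2)
  · filter_upwards [Measure.ae_ne volume a] with s hsa hs
    rw [uIoc_of_le ha0] at hs
    have hsa' : s < a := lt_of_le_of_ne hs.2 hsa
    rw [← undularyIntegrand_zero hs.1]
    have hcont := (continuousAt_undularyIntegrand_add hs.1 (by linarith)).tendsto
    rw [add_zero] at hcont
    refine (hcont.mono_left nhdsWithin_le_nhds).congr' ?_
    filter_upwards [Ioo_mem_nhdsGT (sub_pos.2 hsa')] with t ht
    rw [indicator_of_mem (mem_Iic.2 (by linarith [ht.2]))]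

/-- For `0 < a < 1`, `∫_t^a ((x/(x²+t−t²))² − 1)^{−1/2} dx → 1 − √(1−a²)`
as `t → 0⁺`. -/
theorem undulary_integral_tendsto (a : ℝ) (ha0 : 0 < a) (ha1 : a < 1) :
    Tendsto (fun t => ∫ x in t..a, 1 / Real.sqrt ((x / (x ^ 2 + t - t ^ 2)) ^ 2 - 1))
      (nhdsWithin 0 (Set.Ioi 0)) (nhds (1 - Real.sqrt (1 - a ^ 2))) := by
  refine (tendsto_integral_indicator_undularyIntegrand ha0.le ha1).congr' ?_
  filter_upwards [Ioo_mem_nhdsGT ha0] with t ht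
  exact (integral_eq_integral_indicator_comp_add _ ht.1.le ht.2.le).symm
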